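/- Every closed J_n-positive subset of 2^ω contains the branch set of an n-fat tree. In particular, every closed set that is not covered by countably many sets each omitting a c_n-color contains a perfect subset. -/

import Mathlib

/-- The least coordinate where two elements of Cantor space differ. -/
noncomputable def Δ (x y : ℕ → Bool) : ℕ := sInf {m | x m ≠ y m}

/-- `X` omits the color `m` under `c_n`: no two distinct elements of `X` first
differ at a coordinate congruent to `m` mod `n`. -/
def omitsColor (n m : ℕ) (X : Set (ℕ → Bool)) : Prop :=
  ∀ x ∈ X, ∀ y ∈ X, x ≠ y → Δ x y % n ≠ m

/-- Membership in the σ-ideal `J_n`, σ-generated by the sets omitting a color. -/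
def memJ (n : ℕ) (A : Set (ℕ → Bool)) : Prop :=
  ∃ X : ℕ → Set (ℕ → Bool), (∀ i, ∃ m < n, omitsColor n m (X i)) ∧ A ⊆ ⋃ i, X i

/-- A tree of finite binary sequences: closed under initial segments. -/
def IsTree (T : Set (List Bool)) : Prop := ∀ s ∈ T, ∀ t : List Bool, t <+: s → t ∈ T

/-- `t` is a splitting node of `T`. -/
def Splits (T : Set (List Bool)) (t : List Bool) : Prop :=
  t ∈ T ∧ t ++ [false] ∈ T ∧ t ++ [true] ∈ T

/-- An `n`-fat tree. -/
def nFat (n : ℕ) (T : Set (List Bool)) : Prop :=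
  IsTree T ∧ T.Nonempty ∧
    ∀ s ∈ T, ∀ m < n, ∃ t : List Bool, s <+: t ∧ Splits T t ∧ t.length % n = m

/-- The set of infinite branches of a tree. -/
def branches (T : Set (List Bool)) : Set (ℕ → Bool) :=
  {x | ∀ k : ℕ, (List.ofFn fun i : Fin k => x i) ∈ T}

def seg (x : ℕ → Bool) (k : ℕ) : List Bool := List.ofFn fun i : Fin k => x i

@[simp] lemma seg_length (x : ℕ → Bool) (k : ℕ) : (seg x k).length = k := by
  simp [seg]

lemma seg_get (x : ℕ → Bool) (k i : ℕ) (h : i < (seg x k).length) :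
    (seg x k)[i] = x i := by
  simp [seg]

lemma seg_take (x : ℕ → Bool) {k l : ℕ} (h : k ≤ l) : (seg x l).take k = seg x k := by
  apply List.ext_getElem
  · simp [h]
  · intro i h1 h2
    rw [List.getElem_take]
    rw [seg_get, seg_get]

lemma seg_prefix (x : ℕ → Bool) {k l : ℕ} (h : k ≤ l) : seg x k <+: seg x l := by
  rw [← seg_take x h]; exact List.take_prefix _ _

lemma seg_succ (x : ℕ → Bool) (k : ℕ) : seg x (k+1) = seg x k ++ [x k] := by
  apply List.ext_getElem
  · simp
  · intro i h1 h2
    simp only [seg_length] at h1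
    rcases Nat.lt_or_ge i k with h3 | h3
    · rw [seg_get, List.getElem_append_left (by simpa using h3), seg_get]
    · have hik : i = k := by omega
      subst hik
      rw [seg_get, List.getElem_append_right (by simp)]
      simp

lemma prefix_eq_prefix {l₁ l₂ l : List Bool} (h1 : l₁ <+: l) (h2 : l₂ <+: l)
    (h : l₁.length = l₂.length) : l₁ = l₂ := by
  rw [List.prefix_iff_eq_take] at h1 h2
  rw [h1, h2, h]

lemma delta_mem {x y : ℕ → Bool} (h : x ≠ y) : x (Δ x y) ≠ y (Δ x y) := by
  obtain ⟨i, hi⟩ := Function.ne_iff.1 h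
  exact Nat.sInf_mem (⟨i, hi⟩ : {m | x m ≠ y m}.Nonempty)

lemma delta_agree {x y : ℕ → Bool} {i : ℕ} (h : i < Δ x y) : x i = y i := by
  by_contra hi
  exact absurd h (Nat.not_lt.2 (Nat.sInf_le hi))

lemma seg_delta {x y : ℕ → Bool} : seg x (Δ x y) = seg y (Δ x y) := by
  apply List.ext_getElem (by simp)
  intro i h1 h2
  rw [seg_get, seg_get]
  exact delta_agree (by simpa using h1)

lemma delta_ge {x y : ℕ → Bool} {k : ℕ} (h : seg x k = seg y k) (hxy : x ≠ y) :
    k ≤ Δ x y := by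
  by_contra hc
  push_neg at hc
  have h0 := delta_mem hxy
  have h1 : (seg x k)[Δ x y]'(by simpa using hc) = (seg y k)[Δ x y]'(by simpa using hc) :=
    List.getElem_of_eq h _
  rw [seg_get, seg_get] at h1
  exact h0 h1

lemma mem_branches_iff {T : Set (List Bool)} {x : ℕ → Bool} :
    x ∈ branches T ↔ ∀ k, seg x k ∈ T := Iff.rfl

/-- Nodes that are eventually removed by the fat-tree derivative. -/
inductive Dead (n : ℕ) (T : Set (List Bool)) : List Bool → Prop
  | notMem (s : List Bool) : s ∉ T → Dead n T s
  | mono (s t : List Bool) : s <+: t → Dead n T s → Dead n T t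
  | split (s : List Bool) (m : ℕ) (f : List Bool → Bool) (hm : m < n)
      (h : ∀ t, s <+: t → t.length % n = m → Dead n T (t ++ [f t])) : Dead n T s

section Alive
variable {n : ℕ} {T : Set (List Bool)}

lemma alive_tree : IsTree {s | ¬ Dead n T s} :=
  fun s hs t hts hd => hs (Dead.mono t s hts hd)

lemma alive_sub : {s | ¬ Dead n T s} ⊆ T := by
  intro s hs
  by_contra h
  exact hs (Dead.notMem s h)

lemma alive_fat :
    ∀ s ∈ {s | ¬ Dead n T s}, ∀ m < n, ∃ t : List Bool,
      s <+: t ∧ Splits {s | ¬ Dead n T s} t ∧ t.length % n = m := by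
  classical
  intro s hs m hm
  by_contra hc
  push_neg at hc
  apply hs
  refine Dead.split s m (fun t => if Dead n T (t ++ [false]) then false else true) hm ?_
  intro t hst hlen
  beta_reduce
  split_ifs with hd
  · exact hd
  · by_contra h1
    refine hc t hst ⟨?_, hd, h1⟩ hlen
    exact fun h => hd (Dead.mono _ _ ⟨[false], rfl⟩ h)

/-- Every alive node extends one step. -/
lemma alive_step (hn : 0 < n) {s : List Bool} (hs : ¬ Dead n T s) :
    ∃ b : Bool, ¬ Dead n T (s ++ [b]) := by
  obtain ⟨t, hst, ⟨ht, hf, _⟩, _⟩ := alive_fat s hs 0 hn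
  obtain ⟨u, rfl⟩ := hst
  have hpre : s ++ [(u ++ [false]).getD 0 false] <+: (s ++ u) ++ [false] := by
    rcases u with _ | ⟨b, u⟩
    · simp
    · refine ⟨u ++ [false], by simp⟩
  exact ⟨_, fun hd => hf (Dead.mono _ _ hpre hd)⟩
end Alive

section Branch
variable {n : ℕ} {T : Set (List Bool)}

/-- Through every alive node there is a branch of the alive tree. -/
lemma alive_branch (hn : 0 < n) {s : List Bool} (hs : ¬ Dead n T s) :
    ∃ x : ℕ → Bool, x ∈ branches {s | ¬ Dead n T s} ∧ seg x s.length = s := by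
  classical
  set A : Set (List Bool) := {s | ¬ Dead n T s} with hA
  let F : {t // t ∈ A} → {t // t ∈ A} := fun t =>
    ⟨t.1 ++ [Classical.choose (alive_step hn t.2)],
      Classical.choose_spec (alive_step hn t.2)⟩
  let g : ℕ → {t // t ∈ A} := fun k => F^[k] ⟨s, hs⟩
  have glen : ∀ k, (g k).1.length = s.length + k := by
    intro k
    induction k with
    | zero => rfl
    | succ k ih =>
      show (F^[k+1] ⟨s, hs⟩).1.length = _
      rw [Function.iterate_succ_apply']
      show ((g k).1 ++ _).length = _
      simp [ih]; omega
  have gpre : ∀ l k, k ≤ l → (g k).1 <+: (g l).1 := by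
    intro l
    induction l with
    | zero =>
      intro k hk
      have hk0 : k = 0 := by omega
      subst hk0; exact List.prefix_refl _
    | succ l ih =>
      intro k hk
      rcases Nat.lt_or_ge k (l+1) with h | h
      · refine (ih k (by omega)).trans ?_
        show (g l).1 <+: (F^[l+1] ⟨s, hs⟩).1
        rw [Function.iterate_succ_apply']
        exact ⟨_, rfl⟩
      · have hkl : k = l + 1 := by omega
        subst hkl; exact List.prefix_refl _
  let x : ℕ → Bool := fun i => (g (i+1)).1.getD i false
  have hx : ∀ k i (h : i < (g k).1.length), x i = (g k).1[i] := by
    intro k i h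
    have hi : i < (g (i+1)).1.length := by rw [glen]; omega
    have : x i = (g (i+1)).1[i] := List.getD_eq_getElem _ _ hi
    rw [this]
    rcases Nat.le_total (i+1) k with hk | hk
    · exact (gpre _ _ hk).getElem hi
    · exact ((gpre _ _ hk).getElem h).symm
  have hseg : ∀ k, seg x k = (g k).1.take k := by
    intro k
    apply List.ext_getElem (by simp [glen])
    intro i h1 h2
    rw [seg_get, List.getElem_take]
    exact hx k i (by simp [glen] at h2 ⊢; omega)
  refine ⟨x, fun k => ?_, ?_⟩
  · show seg x k ∈ A
    rw [hseg]
    exact alive_tree _ (g k).2 _ (List.take_prefix _ _)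
  · have h0 : (g 0).1 = s := rfl
    have h2 := gpre s.length 0 (Nat.zero_le _)
    rw [List.prefix_iff_eq_take, h0] at h2
    rw [hseg]
    exact h2.symm

section Topology

def cyl (x : ℕ → Bool) (k : ℕ) : Set (ℕ → Bool) := {y | seg y k = seg x k}

lemma mem_cyl_iff {x y : ℕ → Bool} {k : ℕ} : y ∈ cyl x k ↔ ∀ i < k, y i = x i := by
  constructor
  · intro h i hi
    have := List.getElem_of_eq h (by simpa using hi : i < (seg y k).length)
    rwa [seg_get, seg_get] at this
  · intro h
    apply List.ext_getElem (by simp)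
    intro i h1 h2
    rw [seg_get, seg_get]
    exact h i (by simpa using h1)

lemma isOpen_cyl (x : ℕ → Bool) (k : ℕ) : IsOpen (cyl x k) := by
  have : cyl x k = ⋂ i : Fin k, (fun y : ℕ → Bool => y i) ⁻¹' {x i} := by
    ext y
    simp only [Set.mem_iInter, Set.mem_preimage, Set.mem_singleton_iff, mem_cyl_iff]
    exact ⟨fun h i => h i i.2, fun h i hi => h ⟨i, hi⟩⟩
  rw [this]
  exact isOpen_iInter_of_finite fun i => (isOpen_discrete _).preimage (continuous_apply _)

lemma cyl_subset_of_nhds {x : ℕ → Bool} {U : Set (ℕ → Bool)} (hU : U ∈ nhds x) :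
    ∃ k, cyl x k ⊆ U := by
  rw [nhds_pi, Filter.mem_pi] at hU
  obtain ⟨I, hI, t, ht, hsub⟩ := hU
  obtain ⟨k, hk⟩ := hI.bddAbove
  refine ⟨k + 1, fun y hy => hsub fun i hi => ?_⟩
  have hik : i < k + 1 := Nat.lt_succ_of_le (hk hi)
  rw [mem_cyl_iff.1 hy i hik]
  exact mem_of_mem_nhds (ht i)

lemma tendsto_of_seg {x : ℕ → Bool} {y : ℕ → ℕ → Bool}
    (h : ∀ k, seg (y k) k = seg x k) : Filter.Tendsto y Filter.atTop (nhds x) := by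
  rw [tendsto_pi_nhds]
  intro i
  refine Filter.Tendsto.congr' ?_ (tendsto_const_nhds (x := x i))
  filter_upwards [Filter.eventually_ge_atTop (i + 1)] with k hk
  exact (mem_cyl_iff.1 (h k) i hk).symm

lemma isClosed_branches (A : Set (List Bool)) : IsClosed (branches A) := by
  rw [← isOpen_compl_iff]
  rw [isOpen_iff_forall_mem_open]
  intro x hx
  rw [Set.mem_compl_iff, mem_branches_iff] at hx
  push_neg at hx
  obtain ⟨k, hk⟩ := hx
  refine ⟨cyl x k, fun y hy hyb => ?_, isOpen_cyl x k, mem_cyl_iff.2 fun _ _ => rfl⟩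
  have : seg y k = seg x k := hy
  exact hk (this ▸ hyb k)

end Topology

section Cover
variable {n : ℕ} (hn : 0 < n) {C : Set (ℕ → Bool)}

def treeOf (C : Set (ℕ → Bool)) : Set (List Bool) := {s | ∃ x ∈ C, seg x s.length = s}

lemma omitsColor_empty : omitsColor n 0 (∅ : Set (ℕ → Bool)) := fun x hx => absurd hx (by simp)

lemma dead_cover (hn : 0 < n) {s : List Bool} (hd : Dead n (treeOf C) s) :
    ∃ X : ℕ → Set (ℕ → Bool), (∀ i, ∃ m < n, omitsColor n m (X i)) ∧
      {x | x ∈ C ∧ seg x s.length = s} ⊆ ⋃ i, X i := by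
  classical
  induction hd with
  | notMem s hs =>
    refine ⟨fun _ => ∅, fun i => ⟨0, hn, omitsColor_empty⟩, fun x hx => ?_⟩
    exact absurd ⟨x, hx.1, hx.2⟩ hs
  | mono s t hst hds ih =>
    obtain ⟨X, hX, hcov⟩ := ih
    refine ⟨X, hX, fun x hx => hcov ⟨hx.1, ?_⟩⟩
    have h1 : s.length ≤ t.length := hst.length_le
    rw [← seg_take x h1, hx.2]
    exact (List.prefix_iff_eq_take.1 hst).symm
  | split s m f hm h ih =>
    -- choose covers for the dead children
    have ihc : ∀ t : List Bool, ∃ X : ℕ → Set (ℕ → Bool),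
        (∀ i, ∃ m' < n, omitsColor n m' (X i)) ∧
        (s <+: t → t.length % n = m →
          {x | x ∈ C ∧ seg x (t ++ [f t]).length = t ++ [f t]} ⊆ ⋃ i, X i) := by
      intro t
      by_cases hcond : s <+: t ∧ t.length % n = m
      · obtain ⟨X, hX, hc⟩ := ih t hcond.1 hcond.2
        exact ⟨X, hX, fun _ _ => hc⟩
      · exact ⟨fun _ => ∅, fun i => ⟨0, hn, omitsColor_empty⟩,
          fun h1 h2 => absurd ⟨h1, h2⟩ hcond⟩
    choose G hG hGcov using ihc
    -- the one extra set, omitting color m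
    set Y : Set (ℕ → Bool) :=
      {x | x ∈ C ∧ seg x s.length = s ∧
        ∀ t, s <+: t → t.length % n = m → seg x (t.length + 1) ≠ t ++ [f t]} with hY
    have hYomits : omitsColor n m Y := by
      rintro x ⟨hxC, hxs, hx⟩ y ⟨hyC, hys, hy⟩ hxy hΔ
      set d := Δ x y with hd
      have hsd : s.length ≤ d := delta_ge (by rw [hxs, hys]) hxy
      set t := seg x d with ht
      have hst : s <+: t := by rw [← hxs, ht]; exact seg_prefix x hsd
      have htlen : t.length % n = m := by rwa [ht, seg_length]
      have hxd : x d ≠ y d := delta_mem hxy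
      have hsegy : seg y d = t := seg_delta.symm
      have hlen : t.length = d := by rw [ht, seg_length]
      have hx2 : seg x (t.length + 1) = t ++ [x d] := by rw [hlen, seg_succ, ← ht]
      have hy2 : seg y (t.length + 1) = t ++ [y d] := by rw [hlen, seg_succ, hsegy]
      by_cases hf : f t = x d
      · exact hx t hst htlen (by rw [hf]; exact hx2)
      · have hf2 : f t = y d := by
          revert hf hxd; cases f t <;> cases x d <;> cases y d <;> simp
        exact hy t hst htlen (by rw [hf2]; exact hy2)
    -- combine
    refine ⟨fun i => match i with
      | 0 => Y
      | i + 1 =>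
        match Encodable.decode (α := List Bool) (Nat.unpair i).1 with
        | some t => G t (Nat.unpair i).2
        | none => ∅, ?_, ?_⟩
    · intro i
      match i with
      | 0 => exact ⟨m, hm, hYomits⟩
      | i + 1 =>
        cases hdec : Encodable.decode (α := List Bool) (Nat.unpair i).1 with
        | none => simp only [hdec]; exact ⟨0, hn, omitsColor_empty⟩
        | some t => simp only [hdec]; exact hG t _
    · rintro x ⟨hxC, hxs⟩
      by_cases hx : ∀ t, s <+: t → t.length % n = m → seg x (t.length + 1) ≠ t ++ [f t]
      · exact Set.mem_iUnion.2 ⟨0, hxC, hxs, hx⟩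
      · push_neg at hx
        obtain ⟨t, hst, htlen, hseg⟩ := hx
        have hmem : x ∈ ⋃ i, G t i :=
          hGcov t hst htlen ⟨hxC, by simpa using hseg⟩
        obtain ⟨i, hi⟩ := Set.mem_iUnion.1 hmem
        refine Set.mem_iUnion.2 ⟨Nat.pair (Encodable.encode t) i + 1, ?_⟩
        simp only [Nat.unpair_pair, Encodable.encodek]
        exact hi
end Cover

lemma treeOf_isTree (C : Set (ℕ → Bool)) : IsTree (treeOf C) := by
  rintro s ⟨x, hxC, hxs⟩ t hts
  refine ⟨x, hxC, ?_⟩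
  rw [← seg_take x hts.length_le, hxs]
  exact (List.prefix_iff_eq_take.1 hts).symm

lemma branches_treeOf {C : Set (ℕ → Bool)} (hC : IsClosed C) : branches (treeOf C) ⊆ C := by
  intro x hx
  choose y hyC hyseg using fun k => (hx k : seg x k ∈ treeOf C)
  simp only [seg_length, List.length_ofFn] at hyseg
  exact hC.mem_of_tendsto (tendsto_of_seg hyseg) (Filter.Eventually.of_forall hyC)

/-- Every closed `J_n`-positive set contains the branch set of an `n`-fat tree;
in particular it contains a perfect subset. -/
theorem stmt16 (n : ℕ) (hn : 0 < n) (C : Set (ℕ → Bool)) (hC : IsClosed C)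
    (hpos : ¬ memJ n C) :
    (∃ T : Set (List Bool), nFat n T ∧ branches T ⊆ C) ∧
    (∃ P : Set (ℕ → Bool), P ⊆ C ∧ Perfect P ∧ P.Nonempty) := by
  by_cases hdead : Dead n (treeOf C) []
  · exfalso
    obtain ⟨X, hX, hcov⟩ := dead_cover hn hdead
    exact hpos ⟨X, hX, fun x hx => hcov ⟨hx, rfl⟩⟩
  · set A : Set (List Bool) := {s | ¬ Dead n (treeOf C) s} with hA
    have hsub : branches A ⊆ C := fun x hx =>
      branches_treeOf hC (fun k => alive_sub (hx k))
    have hfat : nFat n A := ⟨alive_tree, ⟨[], hdead⟩, alive_fat⟩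
    refine ⟨⟨A, hfat, hsub⟩, branches A, hsub, ⟨isClosed_branches A, ?_⟩, ?_⟩
    · -- every point of `branches A` is an accumulation point
      intro x hx
      rw [accPt_iff_nhds]
      intro U hU
      obtain ⟨k, hcyl⟩ := cyl_subset_of_nhds hU
      obtain ⟨t, hst, ⟨htA, hf, ht⟩, -⟩ := alive_fat _ (hx k) 0 hn
      have htb : ¬ Dead n (treeOf C) (t ++ [!(x t.length)]) := by
        cases hb : x t.length
        · exact ht
        · exact hf
      obtain ⟨y, hyA, hyseg⟩ := alive_branch hn htb
      have hylen : (t ++ [!(x t.length)]).length = t.length + 1 := by simp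
      rw [hylen] at hyseg
      have hyt : y t.length = !(x t.length) := by
        have h1 := List.getElem_of_eq hyseg (show t.length < (seg y (t.length+1)).length by simp)
        rw [seg_get] at h1
        simpa using h1
      have hne : y ≠ x := by
        intro he
        rw [he] at hyt
        simp at hyt
      have hk : k ≤ t.length := by
        have := hst.length_le
        simpa using this
      have hyx : seg y k = seg x k := by
        refine prefix_eq_prefix (l := t ++ [!(x t.length)]) ?_ ?_ (by simp)
        · rw [← hyseg]; exact seg_prefix y (by omega)
        · exact hst.trans ⟨[!(x t.length)], rfl⟩
      exact ⟨y, ⟨hcyl hyx, hyA⟩, hne⟩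
    · obtain ⟨y, hyA, -⟩ := alive_branch hn hdead
      exact ⟨y, hyA⟩
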